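/- For integers m, n (not both zero), nonnegative integers r, s with r + s = k - 2 (k ≥ 2), and τ in the upper half-plane, the following telescoping derivative identity holds: ∂/∂τ [ ∑_{r+s=k-2} (τ - τ̄)(X - τY)^r (X - τ̄Y)^s / ((mτ+n)^{r+1}(mτ̄+n)^{s+1}) ] = (k-1)(X - τY)^{k-2}/(mτ+n)^k, as an identity of polynomials in X, Y with coefficients real-analytic in τ (τ̄ treated as constant under ∂/∂τ). -/

import Mathlib

open Complex Finset

/-!
Write `p(t) = m t + n` and `q = m τ̄ + n`. Since `m (t - τ̄) = p(t) - q` and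
`(X - tY) + (t - τ̄) Y = X - τ̄ Y`, the `t`-derivative of the `r`-th summand is
`G (r + 1) - G r` with `G j = j (X - tY)^(j-1) (X - τ̄Y)^(k-1-j) / (p^(j+1) q^(k-1-j))`.
The sum therefore telescopes to `G (k - 1) - G 0 = (k - 1) (X - tY)^(k-2) / p^k`.
-/

lemma intCast_mul_add_ne_zero {m n : ℤ} (hmn : (m, n) ≠ 0) {z : ℂ} (hz : z.im ≠ 0) :
    (m : ℂ) * z + n ≠ 0 := by
  have hcd : ![(m : ℝ), n] ≠ 0 := by
    contrapose! hmn
    have h0 := congr_fun hmn 0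
    have h1 := congr_fun hmn 1
    simp_all
  simpa using UpperHalfPlane.linear_ne_zero_of_im hz hcd

-- The factor `j` makes the value at `j = 0` zero, whatever the truncated `j - 1` gives.
noncomputable def telescopingTerm (m n c X Y τ : ℂ) (N j : ℕ) : ℂ :=
  j * (X - τ * Y) ^ (j - 1) * (X - c * Y) ^ (N + 1 - j) /
    ((m * τ + n) ^ (j + 1) * (m * c + n) ^ (N + 1 - j))

section
variable {m n c X Y τ : ℂ}

lemma hasDerivAt_sub_mul_pow_div_pow (hp : m * τ + n ≠ 0) (r : ℕ) :
    HasDerivAt (fun t => (t - c) * (X - t * Y) ^ r / (m * t + n) ^ (r + 1))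
      ((r + 1) * (X - τ * Y) ^ r * (m * c + n) / (m * τ + n) ^ (r + 2) -
        r * (X - τ * Y) ^ (r - 1) * (X - c * Y) / (m * τ + n) ^ (r + 1)) τ := by
  have hnum := ((hasDerivAt_id' τ).sub_const c).fun_mul
      ((((hasDerivAt_id' τ).mul_const Y).const_sub X).fun_pow r)
  have hden := (((hasDerivAt_id' τ).const_mul m).add_const n).fun_pow (r + 1)
  have hden_ne : (m * τ + n) ^ (r + 1) ≠ 0 := pow_ne_zero _ hp
  refine (hnum.fun_div hden hden_ne).congr_deriv ?_
  rw [div_sub_div _ _ (pow_ne_zero _ hp) hden_ne,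
    div_eq_div_iff (pow_ne_zero _ hden_ne) (mul_ne_zero (pow_ne_zero _ hp) hden_ne)]
  rcases r with _ | r <;> push_cast [Nat.add_sub_cancel] <;> ring

lemma hasDerivAt_summand (hp : m * τ + n ≠ 0) (hq : m * c + n ≠ 0) {N r : ℕ} (hr : r ≤ N) :
    HasDerivAt (fun t => (t - c) * (X - t * Y) ^ r * (X - c * Y) ^ (N - r) /
        ((m * t + n) ^ (r + 1) * (m * c + n) ^ (N - r + 1)))
      (telescopingTerm m n c X Y τ N (r + 1) - telescopingTerm m n c X Y τ N r) τ := by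
  simp only [mul_div_mul_comm]
  refine ((hasDerivAt_sub_mul_pow_div_pow hp r).mul_const _).congr_deriv ?_
  rw [telescopingTerm, telescopingTerm, Nat.add_sub_cancel, Nat.add_sub_add_right,
    Nat.sub_add_comm hr]
  field_simp
  push_cast
  ring

lemma hasDerivAt_sum_range (hp : m * τ + n ≠ 0) (hq : m * c + n ≠ 0) (N : ℕ) :
    HasDerivAt (fun t => ∑ r ∈ range (N + 1),
        (t - c) * (X - t * Y) ^ r * (X - c * Y) ^ (N - r) /
          ((m * t + n) ^ (r + 1) * (m * c + n) ^ (N - r + 1)))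
      ((N + 1) * (X - τ * Y) ^ N / (m * τ + n) ^ (N + 2)) τ := by
  have hsum := HasDerivAt.fun_sum fun r hr =>
    hasDerivAt_summand (X := X) (Y := Y) (N := N) hp hq (Nat.lt_succ_iff.mp (mem_range.mp hr))
  rw [sum_range_sub] at hsum
  refine hsum.congr_deriv ?_
  simp [telescopingTerm]
end

/-- the telescoping derivative identity
`∂/∂τ ∑_{r+s=k-2} (τ-τ̄)(X-τY)^r(X-τ̄Y)^s/((mτ+n)^{r+1}(mτ̄+n)^{s+1})
  = (k-1)(X-τY)^{k-2}/(mτ+n)^k`,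
where `τ̄` is held constant (Wirtinger derivative), stated for arbitrary values of
the formal variables `X, Y`. -/
theorem telescoping_derivative (m n : ℤ) (hmn : (m, n) ≠ 0) (k : ℕ) (hk : 2 ≤ k)
    (τ X Y : ℂ) (hτ : 0 < τ.im) :
    HasDerivAt
      (fun t : ℂ => ∑ r ∈ Finset.range (k - 1),
        (t - (starRingEnd ℂ) τ) * (X - t * Y) ^ r *
          (X - (starRingEnd ℂ) τ * Y) ^ (k - 2 - r) /
          (((m : ℂ) * t + n) ^ (r + 1) *
            ((m : ℂ) * (starRingEnd ℂ) τ + n) ^ (k - 2 - r + 1)))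
      (((k : ℂ) - 1) * (X - τ * Y) ^ (k - 2) / ((m : ℂ) * τ + n) ^ k)
      τ := by
  obtain ⟨N, rfl⟩ : ∃ N, k = N + 2 := ⟨k - 2, by omega⟩
  have hp := intCast_mul_add_ne_zero hmn hτ.ne'
  have hq := intCast_mul_add_ne_zero hmn (z := starRingEnd ℂ τ) (by simpa using hτ.ne')
  rw [show N + 2 - 1 = N + 1 by omega, Nat.add_sub_cancel]
  convert hasDerivAt_sum_range hp hq N using 1
  push_cast
  ring
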